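/- Let K ≥ 2, τ ∈ ℝ, and let (μ_k)_{k=1}^K be a concave sequence of reals such that μ_{k*} > τ for at least one k*; set Δ_min = min_{j∈[K]} |μ_j − τ|. Then for every k ∈ {1, …, K−1} such that μ_k < τ or μ_{k+1} < τ, one has |μ_k − μ_{k+1}| ≥ 2·Δ_min. -/

import Mathlib

/-- A finite sequence `(μ_k)_{k=1}^K` is concave if `μ_{k-1} + μ_{k+1} ≤ 2 μ_k`
for all `1 < k < K` (here stated with 0-based indices). -/
def ConcaveSeq {K : ℕ} (μ : Fin K → ℝ) : Prop :=
  ∀ (i : ℕ) (h : i + 2 < K),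
    μ ⟨i, by omega⟩ + μ ⟨i + 2, h⟩ ≤ 2 * μ ⟨i + 1, by omega⟩

/-!
Concavity makes the consecutive differences `μ_{k+1} - μ_k` nonincreasing. If `μ_i` and
`μ_{i+1}` lie on opposite sides of `τ`, their distance `|μ_i - τ| + |μ_{i+1} - τ|` is `≥ 2Δ_min`.
Otherwise both lie below `τ`; walking from `i` towards an index where `μ > τ`, we meet a
consecutive pair crossing `τ`, whose difference is at least `2Δ_min` in absolute value. The
crossing is downward to the left of `i` and upward to the right, so in both cases monotonicity
of the differences transfers the bound to the pair `(i, i + 1)`.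
-/

lemma Nat.exists_not_and_succ_of_le {p : ℕ → Prop} {a b : ℕ} (hab : a ≤ b) (ha : ¬p a)
    (hb : p b) : ∃ c, a ≤ c ∧ c < b ∧ ¬p c ∧ p (c + 1) := by
  induction b, hab using Nat.le_induction with
  | base => exact absurd hb ha
  | succ b hab ih =>
    by_cases hpb : p b
    · obtain ⟨c, hac, hcb, hc⟩ := ih hpb
      exact ⟨c, hac, hcb.trans b.lt_succ_self, hc⟩
    · exact ⟨b, hab, b.lt_succ_self, hpb, hb⟩

lemma two_mul_le_sub_of_le_of_le {a b τ Δ : ℝ} (ha : a ≤ τ) (hb : τ ≤ b)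
    (hΔa : Δ ≤ |a - τ|) (hΔb : Δ ≤ |b - τ|) : 2 * Δ ≤ b - a := by
  rw [abs_of_nonpos (sub_nonpos.2 ha)] at hΔa
  rw [abs_of_nonneg (sub_nonneg.2 hb)] at hΔb
  linarith

lemma antitoneOn_sub_of_concave {f : ℕ → ℝ} {K : ℕ}
    (hf : ∀ n, n + 2 < K → f n + f (n + 2) ≤ 2 * f (n + 1)) :
    AntitoneOn (fun n => f (n + 1) - f n) (Set.Iio (K - 1)) :=
  antitoneOn_of_succ_le Set.ordConnected_Iio fun n _ _ hn => by
    simp only [Order.succ_eq_add_one, Set.mem_Iio] at hn ⊢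
    linarith [hf n (by omega)]

lemma Fin.extend_val_apply {α : Type*} {K : ℕ} (μ : Fin K → α) (e : ℕ → α) {n : ℕ}
    (hn : n < K) : Function.extend Fin.val μ e n = μ ⟨n, hn⟩ :=
  Fin.val_injective.extend_apply μ e ⟨n, hn⟩

lemma ConcaveSeq.extend_val {K : ℕ} {μ : Fin K → ℝ} (hμ : ConcaveSeq μ) (n : ℕ)
    (hn : n + 2 < K) :
    Function.extend Fin.val μ 0 n + Function.extend Fin.val μ 0 (n + 2) ≤
      2 * Function.extend Fin.val μ 0 (n + 1) := by
  rw [Fin.extend_val_apply μ 0 (by omega : n < K), Fin.extend_val_apply μ 0 hn,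
    Fin.extend_val_apply μ 0 (by omega : n + 1 < K)]
  exact hμ n hn

section ThresholdCrossing

variable {f : ℕ → ℝ} {K : ℕ} {τ Δ : ℝ}

lemma two_mul_le_sub_succ_of_crossing_before
    (hd : AntitoneOn (fun n => f (n + 1) - f n) (Set.Iio (K - 1)))
    (hΔ : ∀ n < K, Δ ≤ |f n - τ|)
    {k i : ℕ} (hτk : τ < f k) (hki : k ≤ i) (hi : i + 1 < K) (hfi : f i ≤ τ) :
    2 * Δ ≤ f i - f (i + 1) := by
  obtain ⟨c, -, hci, hc, hc₁⟩ :=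
    Nat.exists_not_and_succ_of_le (p := (f · ≤ τ)) hki (not_le.2 hτk) hfi
  have hjump : 2 * Δ ≤ f c - f (c + 1) :=
    two_mul_le_sub_of_le_of_le hc₁ (not_le.1 hc).le (hΔ _ (by omega)) (hΔ c (by omega))
  have hdiff : f (i + 1) - f i ≤ f (c + 1) - f c :=
    hd (show c < K - 1 by omega) (show i < K - 1 by omega) hci.le
  linarith

lemma two_mul_le_succ_sub_of_crossing_after
    (hd : AntitoneOn (fun n => f (n + 1) - f n) (Set.Iio (K - 1)))
    (hΔ : ∀ n < K, Δ ≤ |f n - τ|)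
    {k i : ℕ} (hk : k < K) (hτk : τ < f k) (hik : i < k) (hfi : f (i + 1) ≤ τ) :
    2 * Δ ≤ f (i + 1) - f i := by
  obtain ⟨c, hic, hck, hc, hc₁⟩ :=
    Nat.exists_not_and_succ_of_le (p := (τ < f ·)) hik (not_lt.2 hfi) hτk
  have hjump : 2 * Δ ≤ f (c + 1) - f c :=
    two_mul_le_sub_of_le_of_le (not_lt.1 hc) hc₁.le (hΔ c (by omega)) (hΔ _ (by omega))
  have hdiff : f (c + 1) - f c ≤ f (i + 1) - f i :=
    hd (show i < K - 1 by omega) (show c < K - 1 by omega) (by omega)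
  linarith

lemma two_mul_le_abs_sub_succ_of_antitoneOn_sub
    (hd : AntitoneOn (fun n => f (n + 1) - f n) (Set.Iio (K - 1)))
    (hΔ : ∀ n < K, Δ ≤ |f n - τ|)
    {k i : ℕ} (hk : k < K) (hτk : τ < f k) (hi : i + 1 < K)
    (hbelow : f i < τ ∨ f (i + 1) < τ) :
    2 * Δ ≤ |f i - f (i + 1)| := by
  rw [le_abs, neg_sub]
  rcases le_or_gt τ (f (i + 1)) with hτ₁ | hτ₁
  · exact .inr (two_mul_le_sub_of_le_of_le (hbelow.resolve_right (not_lt.2 hτ₁)).le hτ₁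
      (hΔ i (by omega)) (hΔ _ hi))
  rcases le_or_gt τ (f i) with hτ₀ | hτ₀
  · exact .inl (two_mul_le_sub_of_le_of_le hτ₁.le hτ₀ (hΔ _ hi) (hΔ i (by omega)))
  rcases le_or_gt k i with hki | hik
  · exact .inl (two_mul_le_sub_succ_of_crossing_before hd hΔ hτk hki hi hτ₀.le)
  · exact .inr (two_mul_le_succ_sub_of_crossing_after hd hΔ hk hτk hik hτ₁.le)

end ThresholdCrossing

/-- For a concave sequence with at least one mean above the threshold, any two consecutive
means at least one of which is below the threshold differ by at least `2·Δ_min`. -/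
theorem concave_consecutive_gap
    (K : ℕ) (τ : ℝ) (μ : Fin K → ℝ) (hconc : ConcaveSeq μ)
    (habove : ∃ kstar, τ < μ kstar) :
    ∀ (i : ℕ) (h : i + 1 < K),
      (μ ⟨i, by omega⟩ < τ ∨ μ ⟨i + 1, h⟩ < τ) →
      2 * (⨅ j, |μ j - τ|) ≤ |μ ⟨i, by omega⟩ - μ ⟨i + 1, h⟩| := by
  intro i h hbelow
  obtain ⟨⟨k, hk⟩, hτk⟩ := habove
  set f := Function.extend Fin.val μ 0
  have hfμ (n : ℕ) (hn : n < K) : f n = μ ⟨n, hn⟩ := Fin.extend_val_apply μ 0 hn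
  have hΔ (n : ℕ) (hn : n < K) : ⨅ j, |μ j - τ| ≤ |f n - τ| := by
    rw [hfμ n hn]
    exact ciInf_le ⟨0, by rintro _ ⟨j, rfl⟩; positivity⟩ _
  rw [← hfμ k hk] at hτk
  rw [← hfμ i (by omega), ← hfμ (i + 1) h] at hbelow ⊢
  exact two_mul_le_abs_sub_succ_of_antitoneOn_sub
    (antitoneOn_sub_of_concave hconc.extend_val) hΔ hk hτk h hbelow
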